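/- There exist simple graphs R₁ and R₂ on a common countably infinite vertex set V such that every edge of R₁ is an edge of R₂, both R₁ and R₂ satisfy the extension property, and the neighbourhood filter F_{R₂} is properly contained in the neighbourhood filter F_{R₁} (that is, every member of F_{R₂} is a member of F_{R₁}, but F_{R₁} ≠ F_{R₂}). -/

import Mathlib

/-- The neighbourhood filter of a graph: the filter generated by the open
neighbourhoods of the vertices. -/
def nbhdFilter {V : Type*} (Γ : SimpleGraph V) : Filter V :=
  Filter.generate {s : Set V | ∃ v : V, s = Γ.neighborSet v}

/-- A graph on a countably infinite vertex set has the extension property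
(characterising the Rado graph) if for all disjoint finite sets `U`, `W` of vertices
there is a vertex outside `U ∪ W` adjacent to everything in `U` and nothing in `W`. -/
def ExtensionProperty {V : Type*} (R : SimpleGraph V) : Prop :=
  ∀ U W : Finset V, Disjoint U W →
    ∃ z : V, z ∉ U ∧ z ∉ W ∧ (∀ u ∈ U, R.Adj z u) ∧ (∀ w ∈ W, ¬ R.Adj z w)


/-!
Take for `R₂` Ackermann's bit model of the Rado graph on `ℕ`, and let `R₁` be `R₂` with the
edges from `0` to the vertices `n` with `Nat.log 2 n` even deleted. In the bit model the
extension witness can be given any sufficiently large prescribed top binary digit, so witnesses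
with odd top digit avoid the deleted edges and `R₁` is again a Rado graph. On the other hand
every finite intersection of `R₂`-neighbourhoods contains a vertex with even top digit, which
is not in the `R₁`-neighbourhood of `0`; so that neighbourhood lies in `F_{R₁}` but not in
`F_{R₂}`, while `R₁ ≤ R₂` gives `F_{R₂} ⊆ F_{R₁}`.
-/

open Filter

namespace SimpleGraph

variable {V : Type*}

theorem nbhdFilter_eq_iInf (G : SimpleGraph V) : nbhdFilter G = ⨅ v, 𝓟 (G.neighborSet v) := by
  have : {s : Set V | ∃ v, s = G.neighborSet v} = Set.range G.neighborSet := by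
    ext s; simp [eq_comm]
  rw [nbhdFilter, generate_eq_biInf, this, iInf_range]

theorem hasBasis_nbhdFilter (G : SimpleGraph V) :
    (nbhdFilter G).HasBasis (fun t : Set V => t.Finite) fun t => ⋂ v ∈ t, G.neighborSet v :=
  G.nbhdFilter_eq_iInf ▸ hasBasis_iInf_principal_finite _

theorem nbhdFilter_mono {G H : SimpleGraph V} (h : G ≤ H) : nbhdFilter G ≤ nbhdFilter H := by
  simp only [nbhdFilter_eq_iInf]
  exact iInf_mono fun v => principal_mono.2 (neighborSet_mono h v)

def ExtensionPropertyOn (G : SimpleGraph V) (A : Set V) : Prop :=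
  ∀ U W : Finset V, Disjoint U W →
    ∃ z ∈ A, z ∉ U ∧ z ∉ W ∧ (∀ u ∈ U, G.Adj z u) ∧ ∀ w ∈ W, ¬ G.Adj z w

theorem ExtensionPropertyOn.extensionProperty {G : SimpleGraph V} {A : Set V}
    (h : G.ExtensionPropertyOn A) : ExtensionProperty G := fun U W hUW =>
  let ⟨z, _, hz⟩ := h U W hUW
  ⟨z, hz⟩

theorem ExtensionPropertyOn.inter_nonempty_of_mem_nbhdFilter {G : SimpleGraph V} {A s : Set V}
    (h : G.ExtensionPropertyOn A) (hs : s ∈ nbhdFilter G) : (s ∩ A).Nonempty := by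
  obtain ⟨t, ht, hts⟩ := G.hasBasis_nbhdFilter.mem_iff.1 hs
  obtain ⟨z, hzA, -, -, hadj, -⟩ := h ht.toFinset ∅ (Finset.disjoint_empty_right _)
  refine ⟨z, hts ?_, hzA⟩
  simp only [Set.mem_iInter, mem_neighborSet]
  exact fun v hv => (hadj v (ht.mem_toFinset.2 hv)).symm

def deleteEdgesBetween (G : SimpleGraph V) (v : V) (P : Set V) : SimpleGraph V :=
  G \ fromRel fun x y => x = v ∧ y ∈ P

variable {G : SimpleGraph V} {v : V} {P : Set V}

theorem deleteEdgesBetween_le : G.deleteEdgesBetween v P ≤ G := sdiff_le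

theorem deleteEdgesBetween_adj_iff {z u : V} (hzv : z ≠ v) (hzP : z ∉ P) :
    (G.deleteEdgesBetween v P).Adj z u ↔ G.Adj z u := by
  simp [deleteEdgesBetween, hzv, hzP]

theorem not_deleteEdgesBetween_adj {z : V} (hz : z ∈ P) :
    ¬ (G.deleteEdgesBetween v P).Adj v z := fun h => by
  simp [deleteEdgesBetween, hz, h.ne] at h

theorem ExtensionPropertyOn.deleteEdgesBetween {A : Set V} (h : G.ExtensionPropertyOn A)
    (hvA : v ∉ A) (hAP : Disjoint A P) : (G.deleteEdgesBetween v P).ExtensionPropertyOn A := by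
  intro U W hUW
  obtain ⟨z, hzA, hzU, hzW, hadj, hnadj⟩ := h U W hUW
  have hzv : z ≠ v := ne_of_mem_of_not_mem hzA hvA
  have hzP : z ∉ P := Set.disjoint_left.1 hAP hzA
  exact ⟨z, hzA, hzU, hzW, fun u hu => (deleteEdgesBetween_adj_iff hzv hzP).2 (hadj u hu),
    fun w hw => mt (deleteEdgesBetween_adj_iff hzv hzP).1 (hnadj w hw)⟩

theorem nbhdFilter_deleteEdgesBetween_ne (h : G.ExtensionPropertyOn P) :
    nbhdFilter (G.deleteEdgesBetween v P) ≠ nbhdFilter G := by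
  intro heq
  have hmem : (G.deleteEdgesBetween v P).neighborSet v ∈ nbhdFilter G :=
    heq ▸ mem_generate_of_mem ⟨v, rfl⟩
  obtain ⟨z, hz, hzP⟩ := h.inter_nonempty_of_mem_nbhdFilter hmem
  exact not_deleteEdgesBetween_adj hzP hz

end SimpleGraph

open SimpleGraph

/-- Ackermann's bit model of the Rado graph. -/
def bitGraph : SimpleGraph ℕ := fromRel fun m n => m.testBit n

theorem Nat.testBit_sum_two_pow (s : Finset ℕ) (n : ℕ) :
    (∑ i ∈ s, 2 ^ i).testBit n = true ↔ n ∈ s := by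
  rw [← Nat.mem_bitIndices, ← List.mem_toFinset, Finset.toFinset_bitIndices_sum_two_pow]

theorem Nat.log_sum_two_pow_insert {s : Finset ℕ} {M : ℕ} (hs : ∀ i ∈ s, i < M) :
    Nat.log 2 (∑ i ∈ insert M s, 2 ^ i) = M := by
  apply Nat.log_eq_of_pow_le_of_lt_pow
  · exact Finset.single_le_sum (fun _ _ => Nat.zero_le _) (Finset.mem_insert_self M s)
  · refine Nat.geomSum_lt le_rfl fun i hi => ?_
    rcases Finset.mem_insert.1 hi with rfl | hi
    exacts [Nat.lt_succ_self i, (hs i hi).trans (Nat.lt_succ_self M)]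

/-- The witness for `U`, `W` is `2 ^ M + ∑ u ∈ U, 2 ^ u` for any `M` with `p M` beyond
`U ∪ W`. -/
theorem bitGraph_extensionPropertyOn (p : ℕ → Prop) (hp : ∀ N, ∃ M, N ≤ M ∧ p M) :
    bitGraph.ExtensionPropertyOn {z | p (Nat.log 2 z)} := by
  intro U W hUW
  obtain ⟨M, hM, hpM⟩ := hp ((U ∪ W).sup id + 1)
  have hlt : ∀ x ∈ U ∪ W, x < M := fun x hx =>
    (Nat.lt_succ_of_le (Finset.le_sup (f := id) hx)).trans_le hM
  set z := ∑ i ∈ insert M U, 2 ^ i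
  have hMz : M < z := Finset.lt_geomSum_of_mem le_rfl (Finset.mem_insert_self M U)
  have hz : ∀ x ∈ U ∪ W, z ≠ x := fun x hx => ((hlt x hx).trans hMz).ne'
  have hbit : ∀ n, z.testBit n = true ↔ n = M ∨ n ∈ U := fun n => by
    rw [Nat.testBit_sum_two_pow, Finset.mem_insert]
  refine ⟨z, ?_, fun h => hz z (Finset.mem_union_left W h) rfl,
    fun h => hz z (Finset.mem_union_right U h) rfl, fun u hu => ?_, fun w hw => ?_⟩
  · show p (Nat.log 2 z)
    rwa [Nat.log_sum_two_pow_insert fun i hi => hlt i (Finset.mem_union_left W hi)]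
  · exact (fromRel_adj _ _ _).2 ⟨hz u (Finset.mem_union_left W hu), .inl ((hbit u).2 (.inr hu))⟩
  · have hwM : w < M := hlt w (Finset.mem_union_right U hw)
    have hwz : w < 2 ^ z := (hwM.trans hMz).trans z.lt_two_pow_self
    rw [bitGraph, fromRel_adj, Nat.testBit_lt_two_pow hwz, hbit]
    rintro ⟨-, (rfl | hwU) | h⟩
    exacts [hwM.ne rfl, Finset.disjoint_left.1 hUW hwU hw, Bool.false_ne_true h]

/-- There are two copies of the Rado graph, one a spanning subgraph of the other,
whose neighbourhood filters are properly nested. -/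
theorem exists_properly_nested_rado_nbhdFilters :
    ∃ (V : Type) (_ : Countable V) (_ : Infinite V) (R₁ R₂ : SimpleGraph V),
      R₁ ≤ R₂ ∧ ExtensionProperty R₁ ∧ ExtensionProperty R₂ ∧
      (∀ s : Set V, s ∈ nbhdFilter R₂ → s ∈ nbhdFilter R₁) ∧
      nbhdFilter R₁ ≠ nbhdFilter R₂ := by
  have hodd : bitGraph.ExtensionPropertyOn {z | Odd (Nat.log 2 z)} :=
    bitGraph_extensionPropertyOn _ fun N => ⟨2 * N + 1, by omega, odd_two_mul_add_one N⟩
  have heven : bitGraph.ExtensionPropertyOn {z | Even (Nat.log 2 z)} :=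
    bitGraph_extensionPropertyOn _ fun N => ⟨2 * N, by omega, even_two_mul N⟩
  have hdisj : Disjoint {z | Odd (Nat.log 2 z)} {z | Even (Nat.log 2 z)} :=
    Set.disjoint_left.2 fun _ ho he => Nat.not_even_iff_odd.2 ho he
  have hle : bitGraph.deleteEdgesBetween 0 {z | Even (Nat.log 2 z)} ≤ bitGraph :=
    deleteEdgesBetween_le
  exact ⟨ℕ, inferInstance, inferInstance, _, bitGraph, hle,
    (hodd.deleteEdgesBetween (by simp) hdisj).extensionProperty, hodd.extensionProperty,
    fun _ hs => nbhdFilter_mono hle hs, nbhdFilter_deleteEdgesBetween_ne heven⟩
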